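/- arXiv:2304.12628 — 2 statements merged into one kernel-verified Lean document; each statement's English description precedes it below -/
import Mathlib

section
/- A quadratic symmetric polynomial matrix Q(y) = C + Σᵢ Lᵢyᵢ + Σᵢⱼ Qᵢⱼ yᵢyⱼ, with C, Lᵢ, Qᵢⱼ ∈ S^m and Qᵢⱼ = Qⱼᵢ, is uniformly PSD-SOS-convex provided the mℓ×mℓ block matrix [Qᵢⱼ]₁≤i,j≤ℓ is positive semidefinite. -/
/-!
The Hessian in `y` of `vᵀQ(y)v` is the constant-in-`y` matrix with entries `vᵀ(Qᵢⱼ + Qⱼᵢ)v`.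
Writing the positive semidefinite block matrix as a Gram matrix `Σₚ wₚ wₚᵀ` turns `vᵀQᵢⱼv` into
`Σₚ fₚᵢ(v) fₚⱼ(v)` for the linear forms `fₚᵢ(v) = Σₐ wₚ(i,a) vₐ`, i.e. `[vᵀQᵢⱼv] = fᵀf`. This matrix
is symmetric, so the Hessian is `2 fᵀf = (√2 f)ᵀ(√2 f)`.
-/

open MvPolynomial Matrix

namespace MvPolynomial

variable {R : Type*} [CommSemiring R] {ι : Type*}

theorem pderiv_pderiv_quadratic [Fintype ι] [DecidableEq ι] (c : R) (L : ι → R)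
    (Q : ι → ι → R) (i j : ι) :
    pderiv i (pderiv j (C c + (∑ i', C (L i') * X i') + ∑ i', ∑ j', C (Q i' j') * X i' * X j'))
      = C (Q i j + Q j i) := by
  simp [Pi.single_apply, Finset.sum_add_distrib, Finset.sum_ite_eq', mul_ite, add_comm]

theorem pderiv_inr_X_inl_mul_X_inl_mul_rename {σ : Type*} (a b : σ) (i : ι)
    (q : MvPolynomial ι R) :
    pderiv (Sum.inr i) (X (Sum.inl a) * X (Sum.inl b) * rename Sum.inr q)
      = X (Sum.inl a) * X (Sum.inl b) * rename Sum.inr (pderiv i q) := by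
  classical
  simp [pderiv_X, pderiv_rename Sum.inr_injective]

theorem pderiv_inr_pderiv_inr_sum_X_inl_mul_X_inl_mul_rename {σ : Type*} [Fintype σ]
    (q : σ → σ → MvPolynomial ι R) (i j : ι) :
    pderiv (Sum.inr i) (pderiv (Sum.inr j)
      (∑ a, ∑ b, X (Sum.inl a) * X (Sum.inl b) * rename Sum.inr (q a b)))
      = ∑ a, ∑ b, X (Sum.inl a) * X (Sum.inl b) * rename Sum.inr (pderiv i (pderiv j (q a b))) := by
  simp only [map_sum, pderiv_inr_X_inl_mul_X_inl_mul_rename]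

end MvPolynomial

namespace Matrix

variable {R S κ ι n : Type*} [CommSemiring R] [CommSemiring S] [Algebra R S] [Fintype n]

def linearForms (w : κ → ι × n → R) (x : n → S) : Matrix κ ι S :=
  of fun p i => ∑ a, algebraMap R S (w p (i, a)) * x a

theorem transpose_linearForms_mul_linearForms_apply [Fintype κ] (w : κ → ι × n → R)
    (x : n → S) (i j : ι) :
    ((linearForms w x)ᵀ * linearForms w x) i j
      = ∑ a, ∑ b, x a * x b * algebraMap R S (∑ p, w p (i, a) * w p (j, b)) := by
  simp only [mul_apply, transpose_apply, linearForms, of_apply, Finset.sum_mul_sum]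
  rw [Finset.sum_comm]
  refine Finset.sum_congr rfl fun a _ => ?_
  rw [Finset.sum_comm]
  refine Finset.sum_congr rfl fun b _ => ?_
  rw [map_sum, Finset.mul_sum]
  refine Finset.sum_congr rfl fun p _ => ?_
  rw [map_mul]
  ring

end Matrix

theorem stmt_3_general {l m : ℕ}
    (Cm : Matrix (Fin m) (Fin m) ℝ) (Lm : Fin l → Matrix (Fin m) (Fin m) ℝ)
    (Qb : Fin l → Fin l → Matrix (Fin m) (Fin m) ℝ)
    (hPSD : (Matrix.of fun p q : Fin l × Fin m => Qb p.1 q.1 p.2 q.2).PosSemidef) :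
    ∃ (k : ℕ) (F : Matrix (Fin k) (Fin l) (MvPolynomial (Fin m ⊕ Fin l) ℝ)),
      (Matrix.of fun i j : Fin l =>
        MvPolynomial.pderiv (Sum.inr i) (MvPolynomial.pderiv (Sum.inr j)
          (∑ a, ∑ b, MvPolynomial.X (Sum.inl a) * MvPolynomial.X (Sum.inl b) *
            MvPolynomial.rename Sum.inr
              (MvPolynomial.C (Cm a b)
                + (∑ i', MvPolynomial.C (Lm i' a b) * MvPolynomial.X i')
                + ∑ i', ∑ j', MvPolynomial.C (Qb i' j' a b) *
                    MvPolynomial.X i' * MvPolynomial.X j'))))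
      = F.transpose * F := by
  obtain ⟨k, w, hw⟩ := posSemidef_iff_eq_sum_vecMulVec.mp hPSD
  have hQ (i j : Fin l) (a b : Fin m) : Qb i j a b = ∑ p, w p (i, a) * w p (j, b) := by
    simpa [Matrix.sum_apply, vecMulVec_apply] using congrFun (congrFun hw (i, a)) (j, b)
  set f := linearForms w (X ∘ Sum.inl : Fin m → MvPolynomial (Fin m ⊕ Fin l) ℝ)
  have hGram (i j : Fin l) : (fᵀ * f) i j
      = ∑ a, ∑ b, X (Sum.inl a) * X (Sum.inl b) * C (Qb i j a b) := by
    simp [f, transpose_linearForms_mul_linearForms_apply, hQ]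
  have hGram_symm (i j : Fin l) : (fᵀ * f) j i = (fᵀ * f) i j := by
    rw [← transpose_apply (fᵀ * f), transpose_mul, transpose_transpose]
  have hscale : (√2 • f)ᵀ * (√2 • f) = (2 : ℝ) • (fᵀ * f) := by
    rw [transpose_smul, smul_mul, Matrix.mul_smul, smul_smul, Real.mul_self_sqrt zero_le_two]
  refine ⟨k, √2 • f, Matrix.ext fun i j => ?_⟩
  rw [of_apply, pderiv_inr_pderiv_inr_sum_X_inl_mul_X_inl_mul_rename, hscale, Matrix.smul_apply,
    two_smul]
  simp only [pderiv_pderiv_quadratic]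
  simp only [rename_C, map_add, mul_add, Finset.sum_add_distrib, ← hGram, hGram_symm]

/-- A quadratic symmetric polynomial matrix `Q(y) = C + Σᵢ Lᵢ yᵢ + Σᵢⱼ Qᵢⱼ yᵢ yⱼ`
is uniformly PSD-SOS-convex provided the block matrix `[Qᵢⱼ]` is positive semidefinite:
there is a polynomial matrix `F(v,y)` with `∇²_{yy}(vᵀQ(y)v) = F(v,y)ᵀF(v,y)`. -/
theorem stmt_3 {l m : ℕ}
    (Cm : Matrix (Fin m) (Fin m) ℝ) (Lm : Fin l → Matrix (Fin m) (Fin m) ℝ)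
    (Qb : Fin l → Fin l → Matrix (Fin m) (Fin m) ℝ)
    (hC : Cm.IsSymm) (hL : ∀ i, (Lm i).IsSymm) (hQsymm : ∀ i j, (Qb i j).IsSymm)
    (hQswap : ∀ i j, Qb i j = Qb j i)
    (hPSD : (Matrix.of fun p q : Fin l × Fin m => Qb p.1 q.1 p.2 q.2).PosSemidef) :
    ∃ (k : ℕ) (F : Matrix (Fin k) (Fin l) (MvPolynomial (Fin m ⊕ Fin l) ℝ)),
      (Matrix.of fun i j : Fin l =>
        MvPolynomial.pderiv (Sum.inr i) (MvPolynomial.pderiv (Sum.inr j)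
          (∑ a, ∑ b, MvPolynomial.X (Sum.inl a) * MvPolynomial.X (Sum.inl b) *
            MvPolynomial.rename Sum.inr
              (MvPolynomial.C (Cm a b)
                + (∑ i', MvPolynomial.C (Lm i' a b) * MvPolynomial.X i')
                + ∑ i', ∑ j', MvPolynomial.C (Qb i' j' a b) *
                    MvPolynomial.X i' * MvPolynomial.X j'))))
      = F.transpose * F :=
  stmt_3_general Cm Lm Qb hPSD
end

section
/- A symmetric polynomial matrix Q(y) = Σ_{α ∈ supp(Q)} Q_α y^α ∈ S[y]^m is uniformly PSD-SOS-convex if the symmetric polynomial matrix Σ_{α ∈ supp(Q)} Q_α ⊗ ∇²_{yy}(y^α) is an SOS matrix. -/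
/-- A symmetric polynomial matrix `Q(y) = Σ_α Q_α y^α` is uniformly PSD-SOS-convex if the
`mℓ×mℓ` symmetric polynomial matrix `Σ_α Q_α ⊗ ∇²_{yy}(y^α)` (whose `((a,i),(b,j))` entry
is `∂ᵢ∂ⱼ(Q a b)`) is an SOS matrix. -/
theorem stmt_4 {l m : ℕ}
    (Q : Matrix (Fin m) (Fin m) (MvPolynomial (Fin l) ℝ)) (hsym : Q.transpose = Q)
    (hsos : ∃ (k : ℕ) (T : Matrix (Fin k) (Fin m × Fin l) (MvPolynomial (Fin l) ℝ)),
      (Matrix.of fun p q : Fin m × Fin l =>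
        MvPolynomial.pderiv p.2 (MvPolynomial.pderiv q.2 (Q p.1 q.1))) = T.transpose * T) :
    ∃ (k : ℕ) (F : Matrix (Fin k) (Fin l) (MvPolynomial (Fin m ⊕ Fin l) ℝ)),
      (Matrix.of fun i j : Fin l =>
        MvPolynomial.pderiv (Sum.inr i) (MvPolynomial.pderiv (Sum.inr j)
          (∑ a, ∑ b, MvPolynomial.X (Sum.inl a) * MvPolynomial.X (Sum.inl b) *
            MvPolynomial.rename Sum.inr (Q a b)))) = F.transpose * F := by
  obtain ⟨k, T, hT⟩ := hsos
  refine ⟨k, Matrix.of fun r j =>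
    ∑ a, MvPolynomial.X (Sum.inl a) * MvPolynomial.rename Sum.inr (T r (a, j)), ?_⟩
  have hent : ∀ (a b : Fin m) (i j : Fin l),
      MvPolynomial.pderiv i (MvPolynomial.pderiv j (Q a b))
        = ∑ r, T r (a, i) * T r (b, j) := by
    intro a b i j
    have := congrFun (congrFun hT (a, i)) (b, j)
    simpa [Matrix.mul_apply, Matrix.transpose_apply] using this
  have hz : ∀ (a : Fin m) (i : Fin l),
      MvPolynomial.pderiv (Sum.inr i : Fin m ⊕ Fin l)
        (MvPolynomial.X (Sum.inl a) : MvPolynomial (Fin m ⊕ Fin l) ℝ) = 0 :=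
    fun a i => MvPolynomial.pderiv_X_of_ne (by simp)
  apply Matrix.ext; intro i j
  simp only [Matrix.of_apply, Matrix.mul_apply, Matrix.transpose_apply]
  have hstep : ∀ (a b : Fin m),
      MvPolynomial.pderiv (Sum.inr i) (MvPolynomial.pderiv (Sum.inr j)
        (MvPolynomial.X (Sum.inl a) * MvPolynomial.X (Sum.inl b) *
          MvPolynomial.rename Sum.inr (Q a b)))
      = MvPolynomial.X (Sum.inl a) * MvPolynomial.X (Sum.inl b) *
          MvPolynomial.rename (Sum.inr : Fin l → Fin m ⊕ Fin l)
            (MvPolynomial.pderiv i (MvPolynomial.pderiv j (Q a b))) := by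
    intro a b
    simp only [MvPolynomial.pderiv_mul, hz, MvPolynomial.pderiv_rename Sum.inr_injective,
      zero_mul, mul_zero, add_zero, zero_add, mul_add, map_add, map_mul]
  calc MvPolynomial.pderiv (Sum.inr i) (MvPolynomial.pderiv (Sum.inr j)
        (∑ a, ∑ b, MvPolynomial.X (Sum.inl a) * MvPolynomial.X (Sum.inl b) *
          MvPolynomial.rename Sum.inr (Q a b)))
      = ∑ a, ∑ b, MvPolynomial.X (Sum.inl a) * MvPolynomial.X (Sum.inl b) *
          MvPolynomial.rename (Sum.inr : Fin l → Fin m ⊕ Fin l)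
            (MvPolynomial.pderiv i (MvPolynomial.pderiv j (Q a b))) := by
        rw [map_sum, map_sum]
        refine Finset.sum_congr rfl fun a _ => ?_
        rw [map_sum, map_sum]
        exact Finset.sum_congr rfl fun b _ => hstep a b
    _ = ∑ r, (∑ a, MvPolynomial.X (Sum.inl a) * MvPolynomial.rename Sum.inr (T r (a, i))) *
          (∑ b, MvPolynomial.X (Sum.inl b) * MvPolynomial.rename Sum.inr (T r (b, j))) := by
        simp only [hent, map_sum, Finset.mul_sum, Finset.sum_mul]
        refine (Finset.sum_congr rfl fun b _ => Finset.sum_comm).trans ?_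
        rw [Finset.sum_comm]
        refine Finset.sum_congr rfl fun r _ => ?_
        rw [Finset.sum_comm]
        refine Finset.sum_congr rfl fun b _ => ?_
        refine Finset.sum_congr rfl fun a _ => ?_
        rw [map_mul]; ring
end
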